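/- The cyclic subgroups generated by N²G̃₁² and by N intersect trivially: the only matrix that is simultaneously a power of N²G̃₁² = diag(e^{4iπ/3}, e^{2iπ/3}, 1) and a power of N = diag(-e^{-iπ/9}, -e^{-iπ/9}, e^{2iπ/9}) is the identity. -/

import Mathlib

/-! With `ζ = e^{2πi/9}`, a primitive ninth root of unity, both generators are diagonal:
`N = diag(ζ⁴, ζ⁴, ζ)` and `N²G̃₁² = diag(ζ⁶, ζ³, 1)`. If `(N²G̃₁²)^i = N^j`, comparing the last
diagonal entries gives `ζ^j = 1`, and then every diagonal entry `ζ^{4j}`, `ζ^j` of `N^j` is `1`. -/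

open Matrix Complex

noncomputable def ephase (t : ℝ) : ℂ := Complex.exp ((t : ℂ) * Complex.I)

noncomputable def G1t : Matrix (Fin 3) (Fin 3) ℂ :=
  !![0, 0, ephase (7 * Real.pi / 9);
     0, -ephase (4 * Real.pi / 9), 0;
     ephase (7 * Real.pi / 9), 0, 0]

noncomputable def G2t : Matrix (Fin 3) (Fin 3) ℂ :=
  !![0, ephase (7 * Real.pi / 9), 0;
     ephase (7 * Real.pi / 9), 0, 0;
     0, 0, -ephase (4 * Real.pi / 9)]

noncomputable def FUMt : Matrix (Fin 3) (Fin 3) ℂ :=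
  !![-ephase (2 * Real.pi / 3), 0, 0;
     0, -ephase (2 * Real.pi / 3), 0;
     0, 0, ephase (2 * Real.pi / 3)]

noncomputable def Nmat : Matrix (Fin 3) (Fin 3) ℂ :=
  !![-ephase (-(Real.pi) / 9), 0, 0;
     0, -ephase (-(Real.pi) / 9), 0;
     0, 0, ephase (2 * Real.pi / 9)]

open Real

theorem Matrix.GeneralLinearGroup.coe_zpow_of_coe_eq_diagonal {n K : Type*} [Fintype n]
    [DecidableEq n] [Field K] {M : GL n K} {d : n → K} (h : (M : Matrix n n K) = diagonal d)
    (i : ℤ) : ((M ^ i : GL n K) : Matrix n n K) = diagonal fun k ↦ d k ^ i := by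
  have hd : ∀ k, d k ≠ 0 := by
    have hdet : (diagonal d).det ≠ 0 := h ▸ (isUnits_det_units M).ne_zero
    simpa [det_diagonal, Finset.prod_ne_zero_iff] using hdet
  rw [coe_units_zpow, h]
  cases i with
  | ofNat m => simp [diagonal_pow]
  | negSucc m =>
    rw [zpow_negSucc, diagonal_pow]
    refine inv_eq_left_inv ?_
    rw [diagonal_mul_diagonal, ← diagonal_one]
    congr 1
    funext k
    simp [hd k]

lemma ephase_add (s t : ℝ) : ephase (s + t) = ephase s * ephase t := by
  simp only [ephase, ofReal_add, add_mul, Complex.exp_add]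

lemma ephase_pi : ephase π = -1 := Complex.exp_pi_mul_I

lemma ephase_pow (t : ℝ) (n : ℕ) : ephase t ^ n = ephase (n * t) := by
  simp only [ephase, ← Complex.exp_nat_mul]
  push_cast
  ring_nf

local notation "ζ" => ephase (2 * π / 9)

lemma isPrimitiveRoot_ephase_two_pi_div_nine : IsPrimitiveRoot ζ 9 := by
  convert Complex.isPrimitiveRoot_exp 9 (by norm_num) using 1
  simp only [ephase]
  push_cast
  ring_nf

lemma Nmat_eq_diagonal : Nmat = diagonal ![ζ ^ 4, ζ ^ 4, ζ] := by
  have h : ζ ^ 4 = -ephase (-π / 9) := by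
    rw [ephase_pow, show ((4 : ℕ) : ℝ) * (2 * π / 9) = -π / 9 + π by push_cast; ring,
      ephase_add, ephase_pi, mul_neg_one]
  rw [h, diagonal_vec3]
  rfl

lemma G1t_sq : G1t ^ 2 = diagonal ![ζ ^ 7, ζ ^ 4, ζ ^ 7] := by
  have h7 : ephase (7 * π / 9) ^ 2 = ζ ^ 7 := by
    rw [ephase_pow, ephase_pow]; congr 1; push_cast; ring
  have h4 : ephase (4 * π / 9) ^ 2 = ζ ^ 4 := by
    rw [ephase_pow, ephase_pow]; congr 1; push_cast; ring
  rw [diagonal_vec3, ← h7, ← h4, pow_two, G1t, mul_fin_three]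
  simp only [mul_zero, zero_mul, add_zero, zero_add, neg_mul_neg, pow_two]

lemma Nmat_sq_mul_G1t_sq : Nmat ^ 2 * G1t ^ 2 = diagonal ![ζ ^ 6, ζ ^ 3, 1] := by
  have h9 : ζ ^ 9 = 1 := isPrimitiveRoot_ephase_two_pi_div_nine.pow_eq_one
  rw [Nmat_eq_diagonal, G1t_sq, diagonal_pow, diagonal_mul_diagonal]
  congr 1
  funext k
  fin_cases k
  · show (ζ ^ 4) ^ 2 * ζ ^ 7 = ζ ^ 6
    linear_combination ζ ^ 6 * h9
  · show (ζ ^ 4) ^ 2 * ζ ^ 4 = ζ ^ 3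
    linear_combination ζ ^ 3 * h9
  · show ζ ^ 2 * ζ ^ 7 = 1
    linear_combination h9

theorem stmt12 (A B : GL (Fin 3) ℂ)
    (hA : (A : Matrix (Fin 3) (Fin 3) ℂ) = Nmat ^ 2 * G1t ^ 2)
    (hB : (B : Matrix (Fin 3) (Fin 3) ℂ) = Nmat) :
    ∀ M : GL (Fin 3) ℂ, (∃ i : ℤ, M = A ^ i) → (∃ j : ℤ, M = B ^ j) → M = 1 := by
  rintro M ⟨i, rfl⟩ ⟨j, hj⟩
  have hA_zpow := GeneralLinearGroup.coe_zpow_of_coe_eq_diagonal (hA.trans Nmat_sq_mul_G1t_sq)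
  have hB_zpow := GeneralLinearGroup.coe_zpow_of_coe_eq_diagonal (hB.trans Nmat_eq_diagonal)
  have hζj : ζ ^ j = 1 := by
    have h22 := congrArg (fun M : GL (Fin 3) ℂ ↦ (M : Matrix (Fin 3) (Fin 3) ℂ) 2 2) hj
    simpa [hA_zpow, hB_zpow] using h22.symm
  have hζ4j : (ζ ^ 4) ^ j = 1 := by
    rw [← zpow_natCast, ← _root_.zpow_mul, _root_.zpow_mul', hζj, _root_.one_zpow]
  rw [hj]
  ext1
  rw [hB_zpow, Units.val_one, ← diagonal_one]
  congr 1
  funext k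
  fin_cases k <;> simp [hζj, hζ4j]
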